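/- arXiv:1109.1779 — 6 statements merged into one kernel-verified Lean document; each statement's English description precedes it below -/
import Mathlib

section
/- The infimum over all k-extendible states σ_{ABab} of tr(X σ_{ABab}) equals the minimal eigenvalue of Ŝₖ(X ⊗ I_{Ee})/(k+1), where Ŝₖ is the symmetrization ∑ᵢ₌₀ᵏ V_{B₀b₀:Bᵢbᵢ} (X ⊗ I) V_{B₀b₀:Bᵢbᵢ}; in particular the infimum is negative iff λ_min(Ŝₖ(X ⊗ I_{Ee})) < 0. -/
open Matrix ComplexOrder

/-- Reduction of a state on `A ⊗ B^{⊗(k+1)}` to system `A` and the `i`-th copy of `B`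
(partial trace over the other copies). -/
noncomputable def red {α β : Type*} [Fintype α] [Fintype β] [DecidableEq β] (k : ℕ)
    (σ : Matrix (α × (Fin (k + 1) → β)) (α × (Fin (k + 1) → β)) ℂ) (i : Fin (k + 1)) :
    Matrix (α × β) (α × β) ℂ :=
  Matrix.of fun p q =>
    ((Fintype.card β : ℂ))⁻¹ *
      ∑ f : Fin (k + 1) → β,
        σ (p.1, Function.update f i p.2) (q.1, Function.update f i q.2)

/-- A state on `α × β` is `k`-extendible (on the second system) if it has a symmetric
extension to `k+1` copies of `β` whose reduction to each copy equals the state. -/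
noncomputable def kExtendible {α β : Type*} [Fintype α] [Fintype β] [DecidableEq β]
    (k : ℕ) (σ : Matrix (α × β) (α × β) ℂ) : Prop :=
  ∃ σ' : Matrix (α × (Fin (k + 1) → β)) (α × (Fin (k + 1) → β)) ℂ,
    σ'.PosSemidef ∧ σ'.trace = 1 ∧ ∀ i, red k σ' i = σ

/-- `V_{B₀b₀:Bᵢbᵢ} (X ⊗ I) V_{B₀b₀:Bᵢbᵢ}` : the operator `X` acting on `A` and the `i`-th
copy of `B`, tensored with the identity on the remaining copies. -/
noncomputable def embedAt {α β : Type*} [Fintype α] [Fintype β] [DecidableEq β] (k : ℕ)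
    (X : Matrix (α × β) (α × β) ℂ) (i : Fin (k + 1)) :
    Matrix (α × (Fin (k + 1) → β)) (α × (Fin (k + 1) → β)) ℂ :=
  Matrix.of fun p q =>
    X (p.1, p.2 i) (q.1, q.2 i) * (if ∀ j, j ≠ i → p.2 j = q.2 j then 1 else 0)

/-- The symmetrization `Ŝₖ(X ⊗ I) = ∑ᵢ V_{B₀b₀:Bᵢbᵢ} (X ⊗ I) V_{B₀b₀:Bᵢbᵢ}`. -/
noncomputable def Shat {α β : Type*} [Fintype α] [Fintype β] [DecidableEq β] (k : ℕ)
    (X : Matrix (α × β) (α × β) ℂ) :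
    Matrix (α × (Fin (k + 1) → β)) (α × (Fin (k + 1) → β)) ℂ :=
  ∑ i, embedAt k X i

/-!
Taking the partial trace is dual to tensoring with the identity:
`tr (Y · red σ' i) = tr (V_i (Y ⊗ I) V_i · σ')`. Hence for any extension `σ'` of a `k`-extendible
`σ`, `(k + 1) tr (X σ) = tr (Ŝₖ(X ⊗ I) σ') ≥ λ_min`. Conversely, if `v` is a unit eigenvector for
`λ_min`, averaging `|v⟩⟨v|` over the cyclic shifts of the `k + 1` copies gives a symmetric
extension of `σ = (k + 1)⁻¹ ∑ᵢ red |v⟩⟨v| i`, and `tr (X σ) = λ_min / (k + 1)`.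
-/

open scoped Kronecker

namespace Matrix

variable {m n R : Type*} [Fintype n]

def traceRight [AddCommMonoid R] (M : Matrix (m × n) (m × n) R) : Matrix m m R :=
  of fun i j => ∑ r, M (i, r) (j, r)

theorem traceRight_eq_sum_submatrix [AddCommMonoid R] (M : Matrix (m × n) (m × n) R) :
    traceRight M = ∑ r, M.submatrix (·, r) (·, r) := by
  ext i j
  simp [traceRight, sum_apply]

theorem trace_mul_traceRight [Fintype m] [DecidableEq n] [Semiring R] (Y : Matrix m m R)
    (M : Matrix (m × n) (m × n) R) : (Y * traceRight M).trace = (Y ⊗ₖ 1 * M).trace := by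
  simp [trace, mul_apply, traceRight, kroneckerMap_apply, one_apply, Fintype.sum_prod_type,
    Finset.mul_sum, ite_mul]
  exact Finset.sum_congr rfl fun i _ => Finset.sum_comm

theorem trace_traceRight [Fintype m] [AddCommMonoid R] (M : Matrix (m × n) (m × n) R) :
    (traceRight M).trace = M.trace := by
  simp [trace, traceRight, Fintype.sum_prod_type]

theorem PosSemidef.traceRight [Ring R] [PartialOrder R] [StarRing R] [AddLeftMono R]
    {M : Matrix (m × n) (m × n) R} (hM : M.PosSemidef) : (traceRight M).PosSemidef := by
  rw [traceRight_eq_sum_submatrix]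
  exact posSemidef_sum _ fun r _ => hM.submatrix _

theorem trace_submatrix_equiv [Fintype m] [AddCommMonoid R] (M : Matrix n n R) (e : m ≃ n) :
    (M.submatrix e e).trace = M.trace :=
  Equiv.sum_comp e fun i => M i i

end Matrix

namespace Matrix.IsHermitian

variable {n : Type*} [Fintype n] [DecidableEq n] {M : Matrix n n ℂ}

theorem iInf_eigenvalues_mul_re_trace_le (hM : M.IsHermitian) {ρ : Matrix n n ℂ}
    (hρ : ρ.PosSemidef) : (⨅ p, hM.eigenvalues p) * ρ.trace.re ≤ (M * ρ).trace.re := by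
  set U : Matrix n n ℂ := ↑hM.eigenvectorUnitary
  have hUU : U * Uᴴ = 1 := mem_unitaryGroup_iff.mp hM.eigenvectorUnitary.2
  set ρ' := Uᴴ * ρ * U
  have hρ' : ρ'.PosSemidef := hρ.conjTranspose_mul_mul_same U
  have htr : ρ'.trace = ρ.trace := by
    rw [trace_mul_cycle, hUU, one_mul]
  have hMρ : (M * ρ).trace = ∑ p, (hM.eigenvalues p : ℂ) * ρ' p p := by
    conv_lhs => rw [hM.spectral_theorem]
    rw [Unitary.conjStarAlgAut_apply, star_eq_conjTranspose, mul_assoc, mul_assoc,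
      trace_mul_comm, mul_assoc]
    simp [trace, diagonal_mul, ρ', U]
  rw [hMρ, ← htr, trace, Complex.re_sum, Complex.re_sum, Finset.mul_sum]
  gcongr with p
  rw [Complex.re_ofReal_mul]
  exact mul_le_mul_of_nonneg_right (ciInf_le (Set.finite_range _).bddBelow p)
    (Complex.nonneg_iff.mp hρ'.diag_nonneg).1

theorem exists_posSemidef_trace_mul_eq_iInf_eigenvalues [Nonempty n] (hM : M.IsHermitian) :
    ∃ ρ : Matrix n n ℂ, ρ.PosSemidef ∧ ρ.trace = 1 ∧
      (M * ρ).trace = ↑(⨅ p, hM.eigenvalues p) := by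
  obtain ⟨p, hp⟩ := exists_eq_ciInf_of_finite (f := hM.eigenvalues)
  set v : n → ℂ := ⇑(hM.eigenvectorBasis p)
  have hv : v ⬝ᵥ star v = 1 := by
    have := orthonormal_iff_ite.mp hM.eigenvectorBasis.orthonormal p p
    rw [if_pos rfl, EuclideanSpace.inner_eq_star_dotProduct] at this
    exact this
  refine ⟨vecMulVec v (star v), posSemidef_vecMulVec_self_star v, by rw [trace_vecMulVec, hv], ?_⟩
  rw [mul_vecMulVec, hM.mulVec_eigenvectorBasis, trace_vecMulVec, smul_dotProduct, hv, hp]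
  simp

end Matrix.IsHermitian

section Extension

variable {α β : Type*} [Fintype α] [Fintype β] [DecidableEq β] {k : ℕ}

/-- In these coordinates `embedAt k X i` is `X ⊗ₖ 1` and `red k ρ i` is a partial trace. -/
def splitCopy (i : Fin (k + 1)) :
    α × (Fin (k + 1) → β) ≃ (α × β) × ({j // j ≠ i} → β) :=
  ((Equiv.refl α).prodCongr (Equiv.funSplitAt i β)).trans (Equiv.prodAssoc _ _ _).symm

theorem embedAt_eq_submatrix_kronecker (X : Matrix (α × β) (α × β) ℂ) (i : Fin (k + 1)) :
    embedAt k X i = (X ⊗ₖ 1).submatrix (splitCopy i) (splitCopy i) := by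
  ext ⟨a, f⟩ ⟨b, g⟩
  simp [embedAt, splitCopy, kroneckerMap_apply, one_apply, funext_iff]

theorem red_eq_traceRight [Nonempty β]
    (ρ : Matrix (α × (Fin (k + 1) → β)) (α × (Fin (k + 1) → β)) ℂ) (i : Fin (k + 1)) :
    red k ρ i = traceRight (ρ.submatrix (splitCopy i).symm (splitCopy i).symm) := by
  ext ⟨a, x⟩ ⟨b, y⟩
  have hupd : ∀ (c d : β) (r : {j // j ≠ i} → β),
      Function.update ((Equiv.funSplitAt i β).symm (c, r)) i d =
        (Equiv.funSplitAt i β).symm (d, r) := by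
    intro c d r
    ext j
    by_cases hj : j = i
    · subst hj; simp
    · simp [hj]
  have hcard : (Fintype.card β : ℂ) ≠ 0 := Nat.cast_ne_zero.mpr Fintype.card_ne_zero
  simp only [red, traceRight, splitCopy, of_apply, submatrix_apply, Equiv.symm_trans_apply,
    Equiv.prodCongr_symm, Equiv.prodCongr_apply]
  rw [← (Equiv.funSplitAt i β).symm.sum_comp, Fintype.sum_prod_type]
  simp [hupd, hcard]

theorem trace_mul_red [Nonempty β] (Y : Matrix (α × β) (α × β) ℂ)
    (ρ : Matrix (α × (Fin (k + 1) → β)) (α × (Fin (k + 1) → β)) ℂ) (i : Fin (k + 1)) :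
    (Y * red k ρ i).trace = (embedAt k Y i * ρ).trace := by
  rw [red_eq_traceRight, trace_mul_traceRight, ← trace_submatrix_equiv _ (splitCopy i),
    ← submatrix_mul_equiv _ _ _ (splitCopy i), embedAt_eq_submatrix_kronecker]
  simp

theorem trace_red [Nonempty β] (ρ : Matrix (α × (Fin (k + 1) → β)) (α × (Fin (k + 1) → β)) ℂ)
    (i : Fin (k + 1)) : (red k ρ i).trace = ρ.trace := by
  rw [red_eq_traceRight, trace_traceRight, trace_submatrix_equiv]

theorem posSemidef_red [Nonempty β]
    {ρ : Matrix (α × (Fin (k + 1) → β)) (α × (Fin (k + 1) → β)) ℂ} (hρ : ρ.PosSemidef)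
    (i : Fin (k + 1)) : (red k ρ i).PosSemidef := by
  rw [red_eq_traceRight]
  exact (hρ.submatrix _).traceRight

theorem red_smul (c : ℂ) (ρ : Matrix (α × (Fin (k + 1) → β)) (α × (Fin (k + 1) → β)) ℂ)
    (i : Fin (k + 1)) : red k (c • ρ) i = c • red k ρ i := by
  ext p q
  simp [red, Finset.mul_sum, mul_left_comm]

theorem red_sum {ι : Type*} (s : Finset ι)
    (ρ : ι → Matrix (α × (Fin (k + 1) → β)) (α × (Fin (k + 1) → β)) ℂ) (i : Fin (k + 1)) :
    red k (∑ c ∈ s, ρ c) i = ∑ c ∈ s, red k (ρ c) i := by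
  ext p q
  simp only [red, of_apply, Matrix.sum_apply, Finset.mul_sum]
  exact Finset.sum_comm

def permCopies (π : Equiv.Perm (Fin (k + 1))) : Equiv.Perm (α × (Fin (k + 1) → β)) :=
  (Equiv.refl α).prodCongr (π.arrowCongr (Equiv.refl β))

theorem red_submatrix_permCopies
    (ρ : Matrix (α × (Fin (k + 1) → β)) (α × (Fin (k + 1) → β)) ℂ)
    (π : Equiv.Perm (Fin (k + 1))) (j : Fin (k + 1)) :
    red k (ρ.submatrix (permCopies π) (permCopies π)) j = red k ρ (π j) := by
  have he : ∀ f v, π.arrowCongr (Equiv.refl β) (Function.update f j v) =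
      Function.update (π.arrowCongr (Equiv.refl β) f) (π j) v := fun f v =>
    Function.update_comp_equiv f π.symm j v
  ext p q
  simp only [red, of_apply, submatrix_apply, permCopies, Equiv.prodCongr_apply, Prod.map,
    Equiv.coe_refl, id_eq, he]
  congr 1
  exact (π.arrowCongr (Equiv.refl β)).sum_comp fun f =>
    ρ (p.1, Function.update f (π j) p.2) (q.1, Function.update f (π j) q.2)

theorem trace_Shat_mul [Nonempty β] (X : Matrix (α × β) (α × β) ℂ)
    (ρ : Matrix (α × (Fin (k + 1) → β)) (α × (Fin (k + 1) → β)) ℂ) :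
    (Shat k X * ρ).trace = ∑ i, (X * red k ρ i).trace := by
  simp only [Shat, Finset.sum_mul, trace_sum, trace_mul_red]

theorem kExtendible.posSemidef [Nonempty β] {σ : Matrix (α × β) (α × β) ℂ}
    (hσ : kExtendible k σ) : σ.PosSemidef := by
  obtain ⟨σ', hσ', -, hred⟩ := hσ
  exact hred 0 ▸ posSemidef_red hσ' 0

theorem kExtendible.trace_eq_one [Nonempty β] {σ : Matrix (α × β) (α × β) ℂ}
    (hσ : kExtendible k σ) : σ.trace = 1 := by
  obtain ⟨σ', -, htr, hred⟩ := hσ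
  rw [← hred 0, trace_red, htr]

theorem kExtendible_smul_sum_red [Nonempty β]
    {ρ : Matrix (α × (Fin (k + 1) → β)) (α × (Fin (k + 1) → β)) ℂ} (hρ : ρ.PosSemidef)
    (htr : ρ.trace = 1) : kExtendible k (((k : ℂ) + 1)⁻¹ • ∑ i, red k ρ i) := by
  have hk : ((k : ℂ) + 1) ≠ 0 := by exact_mod_cast k.succ_ne_zero
  refine ⟨((k : ℂ) + 1)⁻¹ • ∑ c, ρ.submatrix (permCopies (Equiv.addRight c))
    (permCopies (Equiv.addRight c)), ?_, ?_, fun j => ?_⟩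
  · exact (posSemidef_sum _ fun c _ => hρ.submatrix _).smul (by positivity)
  · simp [trace_sum, trace_submatrix_equiv, htr, hk]
  · rw [red_smul, red_sum]
    simp only [red_submatrix_permCopies, Equiv.coe_addRight]
    exact congrArg _ (Equiv.sum_comp (Equiv.addLeft j) fun i => red k ρ i)

theorem iInf_eigenvalues_Shat_div_le [DecidableEq α] [Nonempty β]
    {X : Matrix (α × β) (α × β) ℂ} (hS : (Shat k X).IsHermitian) {σ : Matrix (α × β) (α × β) ℂ}
    (hσ : kExtendible k σ) :
    (⨅ p, hS.eigenvalues p) / (k + 1) ≤ (X * σ).trace.re := by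
  obtain ⟨σ', hσ', htr, hred⟩ := hσ
  have h := hS.iInf_eigenvalues_mul_re_trace_le hσ'
  simp only [trace_Shat_mul, hred, htr, Finset.sum_const, Finset.card_univ, Fintype.card_fin,
    nsmul_eq_mul] at h
  rw [div_le_iff₀ (by positivity)]
  simpa [mul_comm] using h

theorem exists_kExtendible_re_trace_mul_eq [DecidableEq α] [Nonempty α] [Nonempty β]
    {X : Matrix (α × β) (α × β) ℂ} (hS : (Shat k X).IsHermitian) :
    ∃ σ, kExtendible k σ ∧ (X * σ).trace.re = (⨅ p, hS.eigenvalues p) / (k + 1) := by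
  obtain ⟨ρ, hρ, htr, hSρ⟩ := hS.exists_posSemidef_trace_mul_eq_iInf_eigenvalues
  refine ⟨_, kExtendible_smul_sum_red hρ htr, ?_⟩
  have hk : ((k : ℂ) + 1)⁻¹ = (((k + 1 : ℝ))⁻¹ : ℝ) := by push_cast; rfl
  rw [Matrix.mul_smul, trace_smul, Matrix.mul_sum, trace_sum, ← trace_Shat_mul, hSρ, hk,
    smul_eq_mul, ← Complex.ofReal_mul, Complex.ofReal_re, inv_mul_eq_div]

end Extension

theorem stmt4_general {α β : Type*} [Fintype α] [Fintype β] [DecidableEq α] [DecidableEq β]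
    [Nonempty α] [Nonempty β] (k : ℕ)
    (X : Matrix (α × β) (α × β) ℂ)
    (hS : (Shat k X).IsHermitian) :
    sInf {r : ℝ | ∃ σ : Matrix (α × β) (α × β) ℂ,
        σ.PosSemidef ∧ σ.trace = 1 ∧ kExtendible k σ ∧ r = ((X * σ).trace).re}
      = (⨅ p, hS.eigenvalues p) / (k + 1) ∧
    (sInf {r : ℝ | ∃ σ : Matrix (α × β) (α × β) ℂ,
        σ.PosSemidef ∧ σ.trace = 1 ∧ kExtendible k σ ∧ r = ((X * σ).trace).re} < 0 ↔
      (⨅ p, hS.eigenvalues p) < 0) := by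
  rw [IsLeast.csInf_eq (a := (⨅ p, hS.eigenvalues p) / (k + 1)) ⟨?_, ?_⟩]
  · exact ⟨rfl, by rw [div_lt_iff₀ (by positivity), zero_mul]⟩
  · obtain ⟨σ, hσ, hval⟩ := exists_kExtendible_re_trace_mul_eq hS
    exact ⟨σ, hσ.posSemidef, hσ.trace_eq_one, hσ, hval.symm⟩
  · rintro r ⟨σ, -, -, hσ, rfl⟩
    exact iInf_eigenvalues_Shat_div_le hS hσ

/-- the infimum over all `k`-extendible states σ of `tr(Xσ)` equals
`λ_min(Ŝₖ(X ⊗ I))/(k+1)`; in particular it is negative iff `λ_min(Ŝₖ(X ⊗ I)) < 0`. -/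
theorem stmt4 {α β : Type*} [Fintype α] [Fintype β] [DecidableEq α] [DecidableEq β]
    [Nonempty α] [Nonempty β] (k : ℕ)
    (X : Matrix (α × β) (α × β) ℂ) (hX : X.IsHermitian)
    (hS : (Shat k X).IsHermitian) :
    sInf {r : ℝ | ∃ σ : Matrix (α × β) (α × β) ℂ,
        σ.PosSemidef ∧ σ.trace = 1 ∧ kExtendible k σ ∧ r = ((X * σ).trace).re}
      = (⨅ p, hS.eigenvalues p) / (k + 1) ∧
    (sInf {r : ℝ | ∃ σ : Matrix (α × β) (α × β) ℂ,
        σ.PosSemidef ∧ σ.trace = 1 ∧ kExtendible k σ ∧ r = ((X * σ).trace).re} < 0 ↔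
      (⨅ p, hS.eigenvalues p) < 0) :=
  stmt4_general k X hS
end

section
/- The operator M_{ab} ⊗ I_e + M_{ae} ⊗ I_b on three qubits, where M = αI − Φ⁺ (two-qubit), has eigenvalues 2α, (4α−3)/2, and (4α−1)/2; consequently it is positive semidefinite if and only if α ≥ 3/4. -/
open Matrix Kronecker ComplexOrder

/-- Projector onto the maximally entangled state on `ℂ^d ⊗ ℂ^d`. -/
noncomputable def phiPlus (d : ℕ) : Matrix (Fin d × Fin d) (Fin d × Fin d) ℂ :=
  Matrix.of fun p q => if p.1 = p.2 ∧ q.1 = q.2 then (1 / d : ℂ) else 0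

/-- `M = αI − Φ⁺` on two qubits. -/
noncomputable def Malpha (α : ℝ) : Matrix (Fin 2 × Fin 2) (Fin 2 × Fin 2) ℂ :=
  (α : ℂ) • (1 : Matrix (Fin 2 × Fin 2) (Fin 2 × Fin 2) ℂ) - phiPlus 2

/-- `M_{ab} ⊗ I_e` on three qubits `((a,b),e)`. -/
noncomputable def MabIe (α : ℝ) :
    Matrix ((Fin 2 × Fin 2) × Fin 2) ((Fin 2 × Fin 2) × Fin 2) ℂ :=
  Malpha α ⊗ₖ (1 : Matrix (Fin 2) (Fin 2) ℂ)

/-- `M_{ae} ⊗ I_b` on three qubits `((a,b),e)`: `M` acting on qubits `a,e`,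
identity on `b` (i.e. `M_{ab} ⊗ I_e` conjugated by the swap of `b` and `e`). -/
noncomputable def MaeIb (α : ℝ) :
    Matrix ((Fin 2 × Fin 2) × Fin 2) ((Fin 2 × Fin 2) × Fin 2) ℂ :=
  Matrix.of fun p q =>
    Malpha α (p.1.1, p.2) (q.1.1, q.2) * (if p.1.2 = q.1.2 then 1 else 0)

/-! Write `P = Φ⁺_{ab} ⊗ I_e` and let `Q` be its conjugate by the swap of `b` and `e`, so that
the operator is `2α − (P + Q)`. Both are projections, and `PQP = P/4`, `QPQ = Q/4`: the two
ranges meet at a constant angle. Hence `P + Q` is annihilated by `X (X − 1/2) (X − 3/2)`, and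
explicit eigenvectors show that all three roots are eigenvalues. The operator is Hermitian, so
it is positive semidefinite exactly when its least eigenvalue `2α − 3/2` is nonnegative. -/

open Polynomial

theorem IsIdempotentElem.add_mul_sub_mul_sub_eq_zero {K R : Type*} [CommRing K] [Ring R]
    [Algebra K R] {p q : R} (s : K) (hp : IsIdempotentElem p) (hq : IsIdempotentElem q)
    (hpqp : p * q * p = s ^ 2 • p) (hqpq : q * p * q = s ^ 2 • q) :
    (p + q) * (p + q - algebraMap K R (1 - s)) * (p + q - algebraMap K R (1 + s)) = 0 := by
  have hsq : (p + q) * (p + q) = p + q + (p * q + q * p) := by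
    rw [add_mul, mul_add, mul_add, hp.eq, hq.eq]; abel
  have hcube : (p + q) * (p * q + q * p) = p * q + q * p + s ^ 2 • (p + q) := by
    simp only [add_mul, mul_add, ← mul_assoc, hp.eq, hq.eq, hpqp, hqpq]
    module
  generalize p + q = P at hsq hcube ⊢
  generalize p * q + q * p = Q at hsq hcube ⊢
  calc P * (P - algebraMap K R (1 - s)) * (P - algebraMap K R (1 + s))
      = P * (P * P) - 2 • (P * P) + (1 - s ^ 2) • P := by
        simp only [Algebra.algebraMap_eq_smul_one, mul_sub, sub_mul, mul_smul_comm,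
          smul_mul_assoc, mul_one, mul_assoc]
        module
    _ = 0 := by
        rw [hsq, mul_add, hsq, hcube]
        module

theorem spectrum.eval_eq_zero_of_aeval_eq_zero {𝕜 A : Type*} [Field 𝕜] [Ring A]
    [Algebra 𝕜 A] [Nontrivial A] {a : A} {p : 𝕜[X]} (hp : aeval a p = 0) {z : 𝕜}
    (hz : z ∈ spectrum 𝕜 a) :
    p.eval z = 0 := by
  have := spectrum.subset_polynomial_aeval a p ⟨z, hz, rfl⟩
  rwa [hp, spectrum.zero_eq, Set.mem_singleton_iff] at this

theorem Matrix.mem_spectrum_of_mulVec_eq_smul {K n : Type*} [Field K] [Fintype n] [DecidableEq n]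
    {A : Matrix n n K} {μ : K} {v : n → K} (hv : v ≠ 0) (h : A *ᵥ v = μ • v) :
    μ ∈ spectrum K A := by
  rw [← Matrix.spectrum_toLin']
  refine (Module.End.hasEigenvalue_of_hasEigenvector (x := v) ?_).mem_spectrum
  exact Module.End.hasEigenvector_iff.mpr
    ⟨Module.End.mem_eigenspace_iff.mpr (by simpa using h), hv⟩

theorem phiPlus_mul_self (d : ℕ) [NeZero d] : phiPlus d * phiPlus d = phiPlus d := by
  have hd : (d : ℂ) ≠ 0 := NeZero.ne _
  ext ⟨i, j⟩ ⟨k, l⟩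
  simp only [phiPlus, Matrix.mul_apply, Matrix.of_apply, Fintype.sum_prod_type, ite_and]
  simp [ite_mul, mul_ite, mul_inv_cancel_left₀ hd]
  split_ifs <;> rfl

theorem phiPlus_isHermitian (d : ℕ) : (phiPlus d).IsHermitian := by
  ext ⟨i, j⟩ ⟨k, l⟩
  simp only [Matrix.conjTranspose_apply, phiPlus, Matrix.of_apply]
  split_ifs <;> simp_all

def Equiv.swapSecondThird (ι : Type*) : (ι × ι) × ι ≃ (ι × ι) × ι where
  toFun p := ((p.1.1, p.2), p.1.2)
  invFun p := ((p.1.1, p.2), p.1.2)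
  left_inv _ := rfl
  right_inv _ := rfl

noncomputable def phiAB (d : ℕ) :
    Matrix ((Fin d × Fin d) × Fin d) ((Fin d × Fin d) × Fin d) ℂ :=
  phiPlus d ⊗ₖ 1

noncomputable def phiAE (d : ℕ) :
    Matrix ((Fin d × Fin d) × Fin d) ((Fin d × Fin d) × Fin d) ℂ :=
  (phiAB d).submatrix (Equiv.swapSecondThird _) (Equiv.swapSecondThird _)

theorem phiAB_isIdempotentElem (d : ℕ) [NeZero d] : IsIdempotentElem (phiAB d) := by
  rw [IsIdempotentElem, phiAB, ← Matrix.mul_kronecker_mul, phiPlus_mul_self, Matrix.one_mul]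

theorem phiAE_isIdempotentElem (d : ℕ) [NeZero d] : IsIdempotentElem (phiAE d) := by
  rw [IsIdempotentElem, phiAE, Matrix.submatrix_mul_equiv, (phiAB_isIdempotentElem d).eq]

theorem phiAE_submatrix_swapSecondThird (d : ℕ) :
    (phiAE d).submatrix (Equiv.swapSecondThird _) (Equiv.swapSecondThird _) = phiAB d :=
  Matrix.submatrix_submatrix _ _ _ _ _

theorem phiAB_mul_phiAE (d : ℕ) : phiAB d * phiAE d = Matrix.of fun p q =>
    if p.1.1 = p.1.2 ∧ q.1.1 = q.2 ∧ p.2 = q.1.2 then ((d : ℂ) ^ 2)⁻¹ else 0 := by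
  ext ⟨⟨a, b⟩, e⟩ ⟨⟨a', b'⟩, e'⟩
  simp [phiAE, phiAB, phiPlus, Matrix.mul_apply, Matrix.one_apply, Equiv.swapSecondThird,
    Fintype.sum_prod_type, ite_and, ite_mul, mul_ite, sq]
  split_ifs <;> rfl

theorem phiAB_mul_phiAE_mul_phiAB (d : ℕ) :
    phiAB d * phiAE d * phiAB d = ((d : ℂ) ^ 2)⁻¹ • phiAB d := by
  ext ⟨⟨a, b⟩, e⟩ ⟨⟨a', b'⟩, e'⟩
  rw [phiAB_mul_phiAE]
  simp [phiAB, phiPlus, Matrix.mul_apply, Matrix.one_apply, Fintype.sum_prod_type, ite_and,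
    ite_mul, mul_ite]
  split_ifs <;> rfl

theorem phiAE_mul_phiAB_mul_phiAE (d : ℕ) :
    phiAE d * phiAB d * phiAE d = ((d : ℂ) ^ 2)⁻¹ • phiAE d := by
  have h := congrArg (fun M => M.submatrix (Equiv.swapSecondThird _) (Equiv.swapSecondThird _))
    (phiAB_mul_phiAE_mul_phiAB d)
  simp only [← Matrix.submatrix_mul_equiv _ _ _ (Equiv.swapSecondThird _),
    phiAE_submatrix_swapSecondThird, Matrix.submatrix_smul] at h
  exact h

theorem phiAB_isHermitian (d : ℕ) : (phiAB d).IsHermitian := by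
  rw [Matrix.IsHermitian, phiAB, Matrix.conjTranspose_kronecker, phiPlus_isHermitian,
    Matrix.conjTranspose_one]

theorem phiAB_add_phiAE_isHermitian (d : ℕ) : (phiAB d + phiAE d).IsHermitian :=
  (phiAB_isHermitian d).add ((phiAB_isHermitian d).submatrix _)

theorem spectrum_phiAB_add_phiAE_subset (d : ℕ) [NeZero d] :
    spectrum ℂ (phiAB d + phiAE d) ⊆ {0, 1 - 1 / (d : ℂ), 1 + 1 / (d : ℂ)} := by
  intro z hz
  have hroot := spectrum.eval_eq_zero_of_aeval_eq_zero (p := X * (X - C (1 - 1 / (d : ℂ))) *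
    (X - C (1 + 1 / (d : ℂ)))) ?_ hz
  · simpa [sub_eq_zero, or_assoc] using hroot
  have hs : (1 / (d : ℂ)) ^ 2 = ((d : ℂ) ^ 2)⁻¹ := by rw [one_div, inv_pow]
  simpa using (phiAB_isIdempotentElem d).add_mul_sub_mul_sub_eq_zero (1 / (d : ℂ))
    (phiAE_isIdempotentElem d) (by rw [hs, phiAB_mul_phiAE_mul_phiAB])
    (by rw [hs, phiAE_mul_phiAB_mul_phiAE])

theorem MabIe_eq_smul_one_sub_phiAB (α : ℝ) : MabIe α = (α : ℂ) • 1 - phiAB 2 := by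
  ext ⟨⟨a, b⟩, e⟩ ⟨⟨a', b'⟩, e'⟩
  simp only [MabIe, Malpha, phiAB, Matrix.kronecker_apply, Matrix.sub_apply, Matrix.smul_apply,
    Matrix.one_apply, Prod.mk.injEq]
  split_ifs <;> simp_all

theorem MaeIb_eq_smul_one_sub_phiAE (α : ℝ) : MaeIb α = (α : ℂ) • 1 - phiAE 2 := by
  ext ⟨⟨a, b⟩, e⟩ ⟨⟨a', b'⟩, e'⟩
  simp only [MaeIb, Malpha, phiAE, phiAB, Equiv.swapSecondThird, Matrix.of_apply,
    Matrix.submatrix_apply, Equiv.coe_fn_mk, Matrix.kronecker_apply, Matrix.sub_apply,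
    Matrix.smul_apply, Matrix.one_apply, Prod.mk.injEq]
  split_ifs <;> simp_all

theorem MabIe_add_MaeIb_eq_algebraMap_sub (α : ℝ) :
    MabIe α + MaeIb α = algebraMap ℂ _ (2 * α : ℝ) - (phiAB 2 + phiAE 2) := by
  rw [MaeIb_eq_smul_one_sub_phiAE, MabIe_eq_smul_one_sub_phiAB, Algebra.algebraMap_eq_smul_one]
  push_cast
  module

theorem phiAB_add_phiAE_mulVec_apply (d : ℕ) (v : (Fin d × Fin d) × Fin d → ℂ)
    (a b e : Fin d) :
    ((phiAB d + phiAE d) *ᵥ v) ((a, b), e) =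
      (if a = b then (d : ℂ)⁻¹ * ∑ x, v ((x, x), e) else 0) +
        if a = e then (d : ℂ)⁻¹ * ∑ x, v ((x, b), x) else 0 := by
  simp [phiAB, phiAE, phiPlus, Equiv.swapSecondThird, Matrix.mulVec, dotProduct,
    Fintype.sum_prod_type, Matrix.one_apply, add_mul, Finset.sum_add_distrib, ite_mul,
    Finset.mul_sum, ite_and, Finset.sum_ite_irrel]

theorem zero_mem_spectrum_phiAB_add_phiAE_two : (0 : ℂ) ∈ spectrum ℂ (phiAB 2 + phiAE 2) := by
  refine Matrix.mem_spectrum_of_mulVec_eq_smul (v := Pi.single ((0, 1), 1) 1)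
    (fun h => by simpa using congrFun h ((0, 1), 1)) ?_
  ext ⟨⟨a, b⟩, e⟩
  rw [phiAB_add_phiAE_mulVec_apply]
  fin_cases a <;> fin_cases b <;> fin_cases e <;> simp [Pi.single_apply]

theorem one_half_mem_spectrum_phiAB_add_phiAE_two :
    (1 / 2 : ℂ) ∈ spectrum ℂ (phiAB 2 + phiAE 2) := by
  refine Matrix.mem_spectrum_of_mulVec_eq_smul
    (v := Pi.single ((1, 1), 0) 1 - Pi.single ((1, 0), 1) 1)
    (fun h => by simpa using congrFun h ((1, 1), 0)) ?_
  ext ⟨⟨a, b⟩, e⟩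
  rw [phiAB_add_phiAE_mulVec_apply]
  fin_cases a <;> fin_cases b <;> fin_cases e <;> simp [Pi.single_apply]

theorem three_halves_mem_spectrum_phiAB_add_phiAE_two :
    (3 / 2 : ℂ) ∈ spectrum ℂ (phiAB 2 + phiAE 2) := by
  refine Matrix.mem_spectrum_of_mulVec_eq_smul
    (v := 2 • Pi.single ((0, 0), 0) 1 + Pi.single ((1, 0), 1) 1 + Pi.single ((1, 1), 0) 1)
    (fun h => by simpa using congrFun h ((1, 1), 0)) ?_
  ext ⟨⟨a, b⟩, e⟩
  rw [phiAB_add_phiAE_mulVec_apply]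
  fin_cases a <;> fin_cases b <;> fin_cases e <;> norm_num [Fin.sum_univ_two, Pi.single_apply]

theorem spectrum_phiAB_add_phiAE_two : spectrum ℂ (phiAB 2 + phiAE 2) = {0, 1 / 2, 3 / 2} := by
  refine subset_antisymm (fun z hz => ?_) ?_
  · convert spectrum_phiAB_add_phiAE_subset 2 hz using 3 <;> norm_num
  simp only [Set.insert_subset_iff, Set.singleton_subset_iff]
  exact ⟨zero_mem_spectrum_phiAB_add_phiAE_two, one_half_mem_spectrum_phiAB_add_phiAE_two,
    three_halves_mem_spectrum_phiAB_add_phiAE_two⟩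

theorem spectrum_MabIe_add_MaeIb (α : ℝ) :
    spectrum ℂ (MabIe α + MaeIb α) =
      {((2 * α : ℝ) : ℂ), (((4 * α - 3) / 2 : ℝ) : ℂ), (((4 * α - 1) / 2 : ℝ) : ℂ)} := by
  rw [MabIe_add_MaeIb_eq_algebraMap_sub, ← spectrum.singleton_sub_eq,
    spectrum_phiAB_add_phiAE_two, Set.singleton_sub, Set.image_insert_eq, Set.image_pair,
    Set.pair_comm]
  push_cast
  rw [sub_zero, show (2 : ℂ) * α - 3 / 2 = (4 * α - 3) / 2 by ring,
    show (2 : ℂ) * α - 1 / 2 = (4 * α - 1) / 2 by ring]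

theorem MabIe_add_MaeIb_isHermitian (α : ℝ) : (MabIe α + MaeIb α).IsHermitian := by
  rw [MabIe_add_MaeIb_eq_algebraMap_sub]
  exact (IsSelfAdjoint.algebraMap _ (Complex.conj_ofReal _)).sub
    (phiAB_add_phiAE_isHermitian 2)

/-- the operator `M_{ab} ⊗ I_e + M_{ae} ⊗ I_b` has eigenvalues
`2α`, `(4α−3)/2`, `(4α−1)/2`, and is positive semidefinite iff `α ≥ 3/4`. -/
theorem stmt7 (α : ℝ) :
    spectrum ℂ (MabIe α + MaeIb α)
      = {((2 * α : ℝ) : ℂ), (((4 * α - 3) / 2 : ℝ) : ℂ), (((4 * α - 1) / 2 : ℝ) : ℂ)} ∧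
    ((MabIe α + MaeIb α).PosSemidef ↔ 3 / 4 ≤ α) := by
  refine ⟨spectrum_MabIe_add_MaeIb α, ?_⟩
  rw [Matrix.posSemidef_iff_isHermitian_and_spectrum_nonneg, spectrum_MabIe_add_MaeIb]
  simp only [Set.insert_subset_iff, Set.singleton_subset_iff, Set.mem_ofPred_eq,
    Complex.zero_le_real, MabIe_add_MaeIb_isHermitian α, true_and]
  constructor
  · rintro ⟨-, h, -⟩
    linarith
  · intro h
    refine ⟨?_, ?_, ?_⟩ <;> linarith
end

section
/- Suppose there exists a state σ_{ABB₁…B_k} such that tr(ρ_{AB} σ_{ABᵢ}) = 0 for all i=1,…,k and tr(ρ_{AB} σ_{AB}) > 0. Then the measure-and-prepare map Λ(ρ') = tr(ρ' σ_{AB})Φ⁺ + ∑ᵢ tr(ρ' σ_{ABᵢ})(I/4) satisfies F(ρ_{AB},Λ) = 1, i.e., Λ(ρ_{AB}) is proportional to Φ⁺ with positive constant. -/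
/-! The vanishing overlaps kill the white-noise term, so `Λ(ρ)` is `tr(ρ σ_{AB}) Φ⁺`; this
coefficient is real, being the trace of a product of two Hermitian matrices, and it is positive
by hypothesis. -/

open Matrix ComplexOrder

lemma Matrix.IsHermitian.isSelfAdjoint_trace_mul {n R : Type*} [Fintype n] [CommSemiring R]
    [StarRing R] {M N : Matrix n n R} (hM : M.IsHermitian) (hN : N.IsHermitian) :
    IsSelfAdjoint (M * N).trace := by
  rw [IsSelfAdjoint, ← trace_conjTranspose, conjTranspose_mul, hM.eq, hN.eq, trace_mul_comm]

lemma Matrix.IsHermitian.ofReal_re_trace_mul {n : Type*} [Fintype n]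
    {M N : Matrix n n ℂ} (hM : M.IsHermitian) (hN : N.IsHermitian) :
    (((M * N).trace.re : ℝ) : ℂ) = (M * N).trace :=
  Complex.conj_eq_iff_re.mp (hM.isSelfAdjoint_trace_mul hN)

lemma red_isHermitian {α β : Type*} [Fintype α] [Fintype β] [DecidableEq β] {k : ℕ}
    {σ : Matrix (α × (Fin (k + 1) → β)) (α × (Fin (k + 1) → β)) ℂ}
    (hσ : σ.IsHermitian) (i : Fin (k + 1)) : (red k σ i).IsHermitian := by
  ext p q
  simp only [red, conjTranspose_apply, of_apply, star_mul', star_inv₀, star_natCast, star_sum]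
  congr 1
  exact Finset.sum_congr rfl fun f _ =>
    hσ.apply (p.1, Function.update f i p.2) (q.1, Function.update f i q.2)

theorem stmt9_general {A B : Type*} [Fintype A] [Fintype B] [DecidableEq B] (k : ℕ)
    (ρ : Matrix (A × B) (A × B) ℂ) (hρ : ρ.PosSemidef)
    (σ : Matrix (A × (Fin (k + 1) → B)) (A × (Fin (k + 1) → B)) ℂ)
    (hσ : σ.PosSemidef)
    (h0 : 0 < ((ρ * red k σ 0).trace).re)
    (hi : ∀ i : Fin (k + 1), i ≠ 0 → (ρ * red k σ i).trace = 0) :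
    ∃ c : ℝ, 0 < c ∧
      (ρ * red k σ 0).trace • phiPlus 2
          + (∑ i ∈ Finset.univ.filter (fun i : Fin (k + 1) => i ≠ 0),
              (ρ * red k σ i).trace) •
            ((1 / 4 : ℂ) • (1 : Matrix (Fin 2 × Fin 2) (Fin 2 × Fin 2) ℂ))
        = (c : ℂ) • phiPlus 2 := by
  refine ⟨((ρ * red k σ 0).trace).re, h0, ?_⟩
  have hnoise : ∑ i ∈ Finset.univ.filter (fun i : Fin (k + 1) => i ≠ 0),
      (ρ * red k σ i).trace = 0 :=
    Finset.sum_eq_zero fun i hi' => hi i (Finset.mem_filter.mp hi').2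
  rw [hnoise, zero_smul, add_zero, hρ.1.ofReal_re_trace_mul (red_isHermitian hσ.1 0)]

/-- if there is a state `σ_{ABB₁…B_k}` whose reduction `σ_{AB}` (copy `0`)
has positive overlap with `ρ_{AB}` while the reductions `σ_{ABᵢ}` (`i ≠ 0`) have zero
overlap, then the measure-and-prepare map
`Λ(ρ') = tr(ρ'σ_{AB})Φ⁺ + ∑ᵢ tr(ρ'σ_{ABᵢ})(I/4)` maps `ρ` to a positive multiple of Φ⁺,
i.e. `F(ρ,Λ) = 1`. -/
theorem stmt9 {A B : Type*} [Fintype A] [Fintype B] [DecidableEq B] (k : ℕ)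
    (ρ : Matrix (A × B) (A × B) ℂ) (hρ : ρ.PosSemidef) (hρtr : ρ.trace = 1)
    (σ : Matrix (A × (Fin (k + 1) → B)) (A × (Fin (k + 1) → B)) ℂ)
    (hσ : σ.PosSemidef) (hσtr : σ.trace = 1)
    (h0 : 0 < ((ρ * red k σ 0).trace).re)
    (hi : ∀ i : Fin (k + 1), i ≠ 0 → (ρ * red k σ i).trace = 0) :
    ∃ c : ℝ, 0 < c ∧
      (ρ * red k σ 0).trace • phiPlus 2
          + (∑ i ∈ Finset.univ.filter (fun i : Fin (k + 1) => i ≠ 0),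
              (ρ * red k σ i).trace) •
            ((1 / 4 : ℂ) • (1 : Matrix (Fin 2 × Fin 2) (Fin 2 × Fin 2) ℂ))
        = (c : ℂ) • phiPlus 2 :=
  stmt9_general k ρ hρ σ hσ h0 hi
end

section
/- For two distinct density matrices ρ ≠ τ on a finite-dimensional Hilbert space, the trace distance of tensor powers ‖ρ^{⊗n} − τ^{⊗n}‖₁ → 2 as n → ∞; equivalently there exist orthogonal projectors Pₙ, Qₙ = I − Pₙ with tr(ρ^{⊗n}Pₙ) → 1 and tr(τ^{⊗n}Pₙ) → 0. -/
open Matrix Filter ComplexOrder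

/-- The `n`-fold tensor power of a matrix on `ℂ^d`. -/
noncomputable def tpow {d : ℕ} (ρ : Matrix (Fin d) (Fin d) ℂ) (n : ℕ) :
    Matrix (Fin n → Fin d) (Fin n → Fin d) ℂ :=
  Matrix.of fun f g => ∏ i, ρ (f i) (g i)

/-!
Project onto an eigenvector of `ρ - τ` with positive eigenvalue. On one copy this is a two-outcome
measurement whose first outcome has probability `a` under `ρ` and `b < a` under `τ`. Measuring every
copy of the `n`-fold product and accepting when at least a fraction `(a + b) / 2` of the outcomes
are hits gives a projection `Pₙ`, and by Chebyshev's inequality `tr (ρ^{⊗n} Pₙ) → 1` while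
`tr (τ^{⊗n} Pₙ) → 0`. Since `2 tr ((R - T) P) ≤ ‖R - T‖₁ ≤ 2` for states `R`, `T` and `0 ≤ P ≤ 1`,
the trace distance is squeezed to `2`.
-/

namespace Matrix

variable {κ ι R : Type*} [Fintype κ]

def piKronecker [CommMonoid R] (B : κ → Matrix ι ι R) : Matrix (κ → ι) (κ → ι) R :=
  of fun f g => ∏ k, B k (f k) (g k)

lemma conjTranspose_piKronecker [CommSemiring R] [StarRing R] (B : κ → Matrix ι ι R) :
    (piKronecker B)ᴴ = piKronecker fun k => (B k)ᴴ := by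
  ext f g
  simp only [piKronecker, conjTranspose_apply, of_apply, star_prod]

lemma piKronecker_eq_zero [CommMonoidWithZero R] {B : κ → Matrix ι ι R} (k : κ) (hk : B k = 0) :
    piKronecker B = 0 := by
  ext f g
  exact Finset.prod_eq_zero (Finset.mem_univ k) (by simp [hk])

section patternProjection

variable [DecidableEq ι] [CommRing R]

def patternProjection (Q : Matrix ι ι R) (x : κ → Bool) : Matrix (κ → ι) (κ → ι) R :=
  piKronecker fun k => if x k then Q else 1 - Q

lemma isHermitian_patternProjection [StarRing R] {Q : Matrix ι ι R} (hQ : Q.IsHermitian)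
    (x : κ → Bool) : (patternProjection Q x).IsHermitian := by
  rw [IsHermitian, patternProjection, conjTranspose_piKronecker]
  congr! 2 with k
  split_ifs
  exacts [hQ.eq, (isHermitian_one.sub hQ).eq]

lemma isHermitian_sum_patternProjection [StarRing R] {Q : Matrix ι ι R} (hQ : Q.IsHermitian)
    (S : Finset (κ → Bool)) : (∑ x ∈ S, patternProjection Q x).IsHermitian :=
  isSelfAdjoint_sum S fun x _ => isHermitian_patternProjection hQ x

end patternProjection

variable [Fintype ι] [DecidableEq κ]

lemma piKronecker_mul [CommSemiring R] (B C : κ → Matrix ι ι R) :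
    piKronecker B * piKronecker C = piKronecker fun k => B k * C k := by
  ext f g
  simp only [piKronecker, mul_apply, of_apply, Fintype.prod_sum, Finset.prod_mul_distrib]

lemma trace_piKronecker [CommSemiring R] (B : κ → Matrix ι ι R) :
    (piKronecker B).trace = ∏ k, (B k).trace := by
  simp only [trace, diag, piKronecker, of_apply, Fintype.prod_sum]

variable [DecidableEq ι]

lemma PosSemidef.piKronecker {B : κ → Matrix ι ι ℂ} (hB : ∀ k, (B k).PosSemidef) :
    (Matrix.piKronecker B).PosSemidef := by
  open scoped MatrixOrder Matrix.Norms.L2Operator in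
  choose C hC using fun k => CStarAlgebra.nonneg_iff_eq_star_mul_self.mp (hB k).nonneg
  have : Matrix.piKronecker B = (Matrix.piKronecker C)ᴴ * Matrix.piKronecker C := by
    rw [conjTranspose_piKronecker, piKronecker_mul]
    exact congrArg _ (funext hC)
  exact this ▸ posSemidef_conjTranspose_mul_self _

variable [CommRing R]

lemma patternProjection_mul {Q : Matrix ι ι R} (hQ : IsIdempotentElem Q) (x y : κ → Bool) :
    patternProjection Q x * patternProjection Q y =
      if x = y then patternProjection Q x else 0 := by
  have hfactor (b c : Bool) : (if b then Q else 1 - Q) * (if c then Q else 1 - Q) =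
      if b = c then (if b then Q else 1 - Q) else 0 := by
    cases b <;> cases c <;> simp [hQ.eq, hQ.one_sub.eq, mul_sub, sub_mul]
  rw [patternProjection, patternProjection, piKronecker_mul]
  simp only [hfactor]
  split_ifs with hxy
  · simp [hxy]
  · obtain ⟨k, hk⟩ := Function.ne_iff.mp hxy
    exact piKronecker_eq_zero k (if_neg hk)

lemma isIdempotentElem_sum_patternProjection {Q : Matrix ι ι R} (hQ : IsIdempotentElem Q)
    (S : Finset (κ → Bool)) : IsIdempotentElem (∑ x ∈ S, patternProjection Q x) := by
  rw [IsIdempotentElem, Finset.sum_mul_sum]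
  refine Finset.sum_congr rfl fun x hx => ?_
  simp only [patternProjection_mul hQ, Finset.sum_ite_eq, if_pos hx]

lemma trace_piKronecker_mul_patternProjection (ρ Q : Matrix ι ι R) (x : κ → Bool) :
    (piKronecker (fun _ => ρ) * patternProjection Q x).trace =
      ∏ k, if x k then (ρ * Q).trace else ρ.trace - (ρ * Q).trace := by
  rw [patternProjection, piKronecker_mul, trace_piKronecker]
  congr! 2 with k
  split_ifs <;> simp [mul_sub]

end Matrix

lemma tpow_eq_piKronecker {d : ℕ} (ρ : Matrix (Fin d) (Fin d) ℂ) (n : ℕ) :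
    tpow ρ n = piKronecker fun _ => ρ := rfl

lemma trace_tpow {d : ℕ} (ρ : Matrix (Fin d) (Fin d) ℂ) (n : ℕ) :
    (tpow ρ n).trace = ρ.trace ^ n := by
  simp [tpow_eq_piKronecker, trace_piKronecker]

lemma Matrix.PosSemidef.tpow {d : ℕ} {ρ : Matrix (Fin d) (Fin d) ℂ} (hρ : ρ.PosSemidef) (n : ℕ) :
    (tpow ρ n).PosSemidef :=
  PosSemidef.piKronecker fun _ => hρ

namespace Matrix

variable {ι : Type*} [Fintype ι]

lemma IsHermitian.posSemidef_of_isIdempotentElem {P : Matrix ι ι ℂ} (hP : P.IsHermitian)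
    (hPP : IsIdempotentElem P) : P.PosSemidef := by
  have h := posSemidef_conjTranspose_mul_self P
  rwa [hP.eq, hPP.eq] at h

lemma trace_mul_vecMulVec_star (M : Matrix ι ι ℂ) (v : ι → ℂ) :
    (M * vecMulVec v (star v)).trace = star v ⬝ᵥ (M *ᵥ v) := by
  rw [mul_vecMulVec, trace_vecMulVec, dotProduct_comm]

lemma vecMulVec_star_mul_self {v : ι → ℂ} (hv : star v ⬝ᵥ v = 1) :
    vecMulVec v (star v) * vecMulVec v (star v) = vecMulVec v (star v) := by
  rw [vecMulVec_mul_vecMulVec, hv, one_smul]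

end Matrix

section Bernoulli
variable {κ : Type*} [Fintype κ]

def bernoulliWeight (p : ℝ) (x : κ → Bool) : ℝ := ∏ k, if x k then p else 1 - p

def numTrue (x : κ → Bool) : ℕ := (Finset.univ.filter fun k => x k = true).card

lemma bernoulliWeight_nonneg {p : ℝ} (hp₀ : 0 ≤ p) (hp₁ : p ≤ 1) (x : κ → Bool) :
    0 ≤ bernoulliWeight p x :=
  Finset.prod_nonneg fun k _ => by split_ifs <;> linarith

variable [DecidableEq κ]

lemma sum_bernoulliWeight_mul_prod (p : ℝ) (g : κ → Bool → ℝ) :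
    ∑ x, bernoulliWeight p x * ∏ k, g k (x k) = ∏ k, (p * g k true + (1 - p) * g k false) := by
  simp only [bernoulliWeight, ← Finset.prod_mul_distrib]
  rw [← Fintype.prod_sum fun k (b : Bool) => (if b then p else 1 - p) * g k b]
  simp

lemma sum_bernoulliWeight (p : ℝ) : ∑ x : κ → Bool, bernoulliWeight p x = 1 := by
  simpa using sum_bernoulliWeight_mul_prod (κ := κ) p fun _ _ => 1

lemma sum_bernoulliWeight_mul_centered_mul_centered (p : ℝ) (j k : κ) :
    ∑ x, bernoulliWeight p x *
      (((if x j then 1 else 0) - p) * ((if x k then 1 else 0) - p)) =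
      if j = k then p * (1 - p) else 0 := by
  let c (b : Bool) : ℝ := (if b then 1 else 0) - p
  have h := sum_bernoulliWeight_mul_prod p fun l b =>
    (if l = j then c b else 1) * (if l = k then c b else 1)
  simp only [Finset.prod_mul_distrib, Fintype.prod_ite_eq'] at h
  rw [h]
  split_ifs with hjk
  · subst hjk
    rw [Fintype.prod_eq_single j fun l hl => by simp [hl]]
    simp [c]; ring
  · exact Finset.prod_eq_zero (Finset.mem_univ j) (by simp [c, hjk]; ring)

lemma sum_bernoulliWeight_mul_sq_sub (p : ℝ) :
    ∑ x : κ → Bool, bernoulliWeight p x * ((numTrue x : ℝ) - Fintype.card κ * p) ^ 2 =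
      Fintype.card κ * (p * (1 - p)) := by
  have hdev (x : κ → Bool) :
      (numTrue x : ℝ) - Fintype.card κ * p = ∑ k, ((if x k then 1 else 0) - p) := by
    rw [numTrue, Finset.natCast_card_filter]
    simp [Finset.sum_sub_distrib]
  simp_rw [hdev, sq, Finset.sum_mul_sum, Finset.mul_sum]
  rw [Finset.sum_comm]
  simp_rw [Finset.sum_comm (s := Finset.univ (α := κ → Bool)),
    sum_bernoulliWeight_mul_centered_mul_centered]
  simp

lemma sum_bernoulliWeight_le_of_le_abs {p ε : ℝ} (hp₀ : 0 ≤ p) (hp₁ : p ≤ 1) (hε : 0 < ε)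
    (S : Finset (κ → Bool)) (hS : ∀ x ∈ S, ε ≤ |(numTrue x : ℝ) - Fintype.card κ * p|) :
    ∑ x ∈ S, bernoulliWeight p x ≤ Fintype.card κ * (p * (1 - p)) / ε ^ 2 := by
  rw [le_div_iff₀ (by positivity), Finset.sum_mul, ← sum_bernoulliWeight_mul_sq_sub]
  calc ∑ x ∈ S, bernoulliWeight p x * ε ^ 2
      ≤ ∑ x ∈ S, bernoulliWeight p x * ((numTrue x : ℝ) - Fintype.card κ * p) ^ 2 :=
        Finset.sum_le_sum fun x hx => mul_le_mul_of_nonneg_left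
          (sq_le_sq.mpr (by rw [abs_of_pos hε]; exact hS x hx)) (bernoulliWeight_nonneg hp₀ hp₁ x)
    _ ≤ ∑ x, bernoulliWeight p x * ((numTrue x : ℝ) - Fintype.card κ * p) ^ 2 :=
        Finset.sum_le_sum_of_subset_of_nonneg (Finset.subset_univ S) fun x _ _ =>
          mul_nonneg (bernoulliWeight_nonneg hp₀ hp₁ x) (sq_nonneg _)

end Bernoulli

/-- Weak law of large numbers for Bernoulli trials. -/
lemma tendsto_sum_bernoulliWeight_of_le_abs {p δ : ℝ} (hp₀ : 0 ≤ p) (hp₁ : p ≤ 1) (hδ : 0 < δ)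
    (S : ∀ n : ℕ, Finset (Fin n → Bool))
    (hS : ∀ n, ∀ x ∈ S n, δ * n ≤ |(numTrue x : ℝ) - n * p|) :
    Tendsto (fun n => ∑ x ∈ S n, bernoulliWeight p x) atTop (nhds 0) := by
  refine tendsto_of_tendsto_of_tendsto_of_le_of_le' tendsto_const_nhds
    (tendsto_const_div_atTop_nhds_zero_nat (p * (1 - p) / δ ^ 2))
    (Eventually.of_forall fun n => Finset.sum_nonneg fun x _ => bernoulliWeight_nonneg hp₀ hp₁ x)
    (eventually_gt_atTop 0 |>.mono fun n hn => ?_)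
  have hn' : (0 : ℝ) < n := Nat.cast_pos.mpr hn
  calc ∑ x ∈ S n, bernoulliWeight p x ≤ n * (p * (1 - p)) / (δ * n) ^ 2 := by
        simpa only [Fintype.card_fin] using sum_bernoulliWeight_le_of_le_abs (ε := δ * n)
          hp₀ hp₁ (by positivity) (S n) (by simpa only [Fintype.card_fin] using hS n)
    _ = p * (1 - p) / δ ^ 2 / n := by field_simp

lemma tendsto_sum_bernoulliWeight_le_numTrue_of_lt {p c : ℝ} (hp₀ : 0 ≤ p) (hp₁ : p ≤ 1)
    (hpc : p < c) :
    Tendsto (fun n => ∑ x ∈ Finset.univ.filter fun x : Fin n → Bool => c * n ≤ numTrue x,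
      bernoulliWeight p x) atTop (nhds 0) :=
  tendsto_sum_bernoulliWeight_of_le_abs hp₀ hp₁ (sub_pos.mpr hpc) _ fun n x hx => by
    have := (Finset.mem_filter.mp hx).2
    linarith [le_abs_self ((numTrue x : ℝ) - n * p)]

lemma tendsto_sum_bernoulliWeight_le_numTrue_of_gt {p c : ℝ} (hp₀ : 0 ≤ p) (hp₁ : p ≤ 1)
    (hcp : c < p) :
    Tendsto (fun n => ∑ x ∈ Finset.univ.filter fun x : Fin n → Bool => c * n ≤ numTrue x,
      bernoulliWeight p x) atTop (nhds 1) := by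
  have hlower := tendsto_sum_bernoulliWeight_of_le_abs hp₀ hp₁ (sub_pos.mpr hcp)
    (fun n => Finset.univ.filter fun x : Fin n → Bool => ¬ c * n ≤ numTrue x) fun n x hx => by
      have := (Finset.mem_filter.mp hx).2
      linarith [neg_le_abs ((numTrue x : ℝ) - n * p)]
  convert hlower.const_sub 1 using 2 with n
  · rw [eq_sub_iff_add_eq, Finset.sum_filter_add_sum_filter_not, sum_bernoulliWeight]
  · simp

lemma re_trace_tpow_mul_sum_patternProjection {d n : ℕ} {ρ Q : Matrix (Fin d) (Fin d) ℂ} {a : ℝ}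
    (hρ : ρ.trace = 1) (ha : (ρ * Q).trace = a) (S : Finset (Fin n → Bool)) :
    (tpow ρ n * ∑ x ∈ S, patternProjection Q x).trace.re = ∑ x ∈ S, bernoulliWeight a x := by
  rw [Finset.mul_sum, trace_sum, Complex.re_sum]
  refine Finset.sum_congr rfl fun x _ => ?_
  rw [tpow_eq_piKronecker, trace_piKronecker_mul_patternProjection, hρ, ha, bernoulliWeight]
  simp only [← Complex.ofReal_one, ← Complex.ofReal_sub, ← apply_ite, ← Complex.ofReal_prod,
    Complex.ofReal_re]

namespace Matrix.IsHermitian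
variable {ι : Type*} [Fintype ι] [DecidableEq ι] {A : Matrix ι ι ℂ} (hA : A.IsHermitian)

lemma star_dotProduct_eigenvectorBasis_self (i : ι) :
    star ⇑(hA.eigenvectorBasis i) ⬝ᵥ ⇑(hA.eigenvectorBasis i) = 1 := by
  rw [dotProduct_comm, ← EuclideanSpace.inner_eq_star_dotProduct,
    inner_self_eq_norm_sq_to_K, hA.eigenvectorBasis.orthonormal.1 i]
  simp

lemma sum_star_dotProduct_mulVec_eigenvectorBasis (M : Matrix ι ι ℂ) :
    ∑ i, star ⇑(hA.eigenvectorBasis i) ⬝ᵥ (M *ᵥ ⇑(hA.eigenvectorBasis i)) = M.trace := by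
  let U : Matrix ι ι ℂ := hA.eigenvectorUnitary
  calc _ = (star U * M * U).trace := by
        simp [U, trace, mul_apply, dotProduct, mulVec, Finset.mul_sum, mul_assoc]
    _ = M.trace := by
        rw [trace_mul_cycle, mem_unitaryGroup_iff.mp hA.eigenvectorUnitary.2, one_mul]

lemma trace_mul_eq_sum_eigenvalues_mul (M : Matrix ι ι ℂ) :
    (A * M).trace = ∑ i, (hA.eigenvalues i : ℂ) *
      (star ⇑(hA.eigenvectorBasis i) ⬝ᵥ (M *ᵥ ⇑(hA.eigenvectorBasis i))) := by
  rw [trace_mul_comm, ← hA.sum_star_dotProduct_mulVec_eigenvectorBasis]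
  refine Finset.sum_congr rfl fun i _ => ?_
  rw [← mulVec_mulVec, hA.mulVec_eigenvectorBasis, mulVec_smul, dotProduct_smul,
    Complex.real_smul]

lemma re_star_dotProduct_mulVec_eigenvectorBasis_mem_Icc {P : Matrix ι ι ℂ} (hP : P.PosSemidef)
    (hP' : (1 - P).PosSemidef) (i : ι) :
    (star ⇑(hA.eigenvectorBasis i) ⬝ᵥ (P *ᵥ ⇑(hA.eigenvectorBasis i))).re ∈ Set.Icc 0 1 := by
  have h1 := (Complex.nonneg_iff.mp (hP'.dotProduct_mulVec_nonneg ⇑(hA.eigenvectorBasis i))).1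
  rw [sub_mulVec, one_mulVec, dotProduct_sub, hA.star_dotProduct_eigenvectorBasis_self,
    Complex.sub_re, Complex.one_re] at h1
  exact ⟨(Complex.nonneg_iff.mp (hP.dotProduct_mulVec_nonneg _)).1, by linarith⟩

lemma two_mul_re_trace_mul_le {P : Matrix ι ι ℂ} (hP : P.PosSemidef) (hP' : (1 - P).PosSemidef) :
    2 * (A * P).trace.re ≤ ∑ i, |hA.eigenvalues i| + A.trace.re := by
  rw [hA.trace_mul_eq_sum_eigenvalues_mul, hA.trace_eq_sum_eigenvalues, Complex.re_sum,
    Complex.re_sum, Finset.mul_sum, ← Finset.sum_add_distrib]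
  refine Finset.sum_le_sum fun i _ => ?_
  obtain ⟨h0, h1⟩ := hA.re_star_dotProduct_mulVec_eigenvectorBasis_mem_Icc hP hP' i
  simp only [Complex.re_ofReal_mul, Complex.coe_algebraMap, Complex.ofReal_re]
  rcases le_total 0 (hA.eigenvalues i) with h | h
  · rw [abs_of_nonneg h]; nlinarith
  · rw [abs_of_nonpos h]; nlinarith

lemma star_dotProduct_mulVec_eigenvectorBasis_le_trace {M : Matrix ι ι ℂ} (hM : M.PosSemidef)
    (i : ι) :
    star ⇑(hA.eigenvectorBasis i) ⬝ᵥ (M *ᵥ ⇑(hA.eigenvectorBasis i)) ≤ M.trace := by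
  rw [← hA.sum_star_dotProduct_mulVec_eigenvectorBasis M]
  exact Finset.single_le_sum (f := fun j => star ⇑(hA.eigenvectorBasis j) ⬝ᵥ
    (M *ᵥ ⇑(hA.eigenvectorBasis j))) (fun j _ => hM.dotProduct_mulVec_nonneg _)
    (Finset.mem_univ i)

lemma exists_eigenvalues_pos (htr : A.trace = 0) (hne : A ≠ 0) : ∃ i, 0 < hA.eigenvalues i := by
  by_contra! hle
  have hsum : ∑ i, hA.eigenvalues i = 0 := by
    simpa [Complex.ext_iff] using hA.trace_eq_sum_eigenvalues.symm.trans htr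
  have hzero : hA.eigenvalues = 0 :=
    funext fun i => (Finset.sum_eq_zero_iff_of_nonpos fun j _ => hle j).mp hsum i
      (Finset.mem_univ i)
  exact hne (hA.eigenvalues_eq_zero_iff.mp hzero)

end Matrix.IsHermitian

namespace Matrix
variable {ι : Type*} [Fintype ι] [DecidableEq ι]

lemma sum_abs_eigenvalues_sub_le {R T : Matrix ι ι ℂ} (hR : R.PosSemidef) (hT : T.PosSemidef)
    (h : (R - T).IsHermitian) :
    ∑ i, |h.eigenvalues i| ≤ R.trace.re + T.trace.re := by
  let q (M : Matrix ι ι ℂ) (i : ι) : ℝ :=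
    (star ⇑(h.eigenvectorBasis i) ⬝ᵥ (M *ᵥ ⇑(h.eigenvectorBasis i))).re
  have hq {M : Matrix ι ι ℂ} (hM : M.PosSemidef) (i : ι) : 0 ≤ q M i :=
    (Complex.nonneg_iff.mp (hM.dotProduct_mulVec_nonneg _)).1
  calc ∑ i, |h.eigenvalues i| = ∑ i, |q R i - q T i| := by
        simp only [h.eigenvalues_eq, sub_mulVec, dotProduct_sub, RCLike.re_to_complex,
          Complex.sub_re, q]
    _ ≤ ∑ i, (q R i + q T i) := Finset.sum_le_sum fun i _ =>
        abs_sub_le_iff.mpr ⟨by linarith [hq hT i], by linarith [hq hR i]⟩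
    _ = R.trace.re + T.trace.re := by
        rw [Finset.sum_add_distrib, ← h.sum_star_dotProduct_mulVec_eigenvectorBasis R,
          ← h.sum_star_dotProduct_mulVec_eigenvectorBasis T, Complex.re_sum, Complex.re_sum]

lemma exists_projection_re_trace_mul_lt {ρ τ : Matrix ι ι ℂ} (hρ : ρ.PosSemidef)
    (hρtr : ρ.trace = 1) (hτ : τ.PosSemidef) (hτtr : τ.trace = 1) (hne : ρ ≠ τ) :
    ∃ (Q : Matrix ι ι ℂ) (a b : ℝ), Q.IsHermitian ∧ Q * Q = Q ∧
      (ρ * Q).trace = a ∧ (τ * Q).trace = b ∧ 0 ≤ b ∧ b < a ∧ a ≤ 1 := by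
  have hA : (ρ - τ).IsHermitian := hρ.1.sub hτ.1
  obtain ⟨i, hi⟩ := hA.exists_eigenvalues_pos (by rw [trace_sub, hρtr, hτtr, sub_self])
    (sub_ne_zero.mpr hne)
  set v : ι → ℂ := ⇑(hA.eigenvectorBasis i)
  have hρv : 0 ≤ star v ⬝ᵥ (ρ *ᵥ v) := hρ.dotProduct_mulVec_nonneg v
  have hτv : 0 ≤ star v ⬝ᵥ (τ *ᵥ v) := hτ.dotProduct_mulVec_nonneg v
  have hρv1 : star v ⬝ᵥ (ρ *ᵥ v) ≤ 1 :=
    hρtr ▸ hA.star_dotProduct_mulVec_eigenvectorBasis_le_trace hρ i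
  refine ⟨vecMulVec v (star v), (star v ⬝ᵥ (ρ *ᵥ v)).re, (star v ⬝ᵥ (τ *ᵥ v)).re,
    (posSemidef_vecMulVec_self_star v).1,
    vecMulVec_star_mul_self (hA.star_dotProduct_eigenvectorBasis_self i), ?_, ?_,
    (Complex.nonneg_iff.mp hτv).1, ?_, (Complex.le_def.mp hρv1).1⟩
  · rw [trace_mul_vecMulVec_star, ← Complex.eq_re_of_ofReal_le (Complex.ofReal_zero ▸ hρv)]
  · rw [trace_mul_vecMulVec_star, ← Complex.eq_re_of_ofReal_le (Complex.ofReal_zero ▸ hτv)]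
  · have hgap := hA.eigenvalues_eq i
    rw [sub_mulVec, dotProduct_sub, RCLike.re_to_complex, Complex.sub_re] at hgap
    linarith

end Matrix

/-- for distinct density matrices `ρ ≠ τ`, the trace distance of tensor
powers `‖ρ^{⊗n} − τ^{⊗n}‖₁` (sum of absolute values of eigenvalues of the Hermitian
difference) tends to 2; equivalently there are orthogonal projectors `Pₙ` with
`tr(ρ^{⊗n}Pₙ) → 1` and `tr(τ^{⊗n}Pₙ) → 0`. -/
theorem stmt11 {d : ℕ} (ρ τ : Matrix (Fin d) (Fin d) ℂ)
    (hρ : ρ.PosSemidef) (hρtr : ρ.trace = 1)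
    (hτ : τ.PosSemidef) (hτtr : τ.trace = 1) (hne : ρ ≠ τ)
    (hH : ∀ n : ℕ, (tpow ρ n - tpow τ n).IsHermitian) :
    Tendsto (fun n : ℕ => ∑ f, |(hH n).eigenvalues f|) atTop (nhds 2) ∧
    ∃ P : (n : ℕ) → Matrix (Fin n → Fin d) (Fin n → Fin d) ℂ,
      (∀ n, (P n).IsHermitian ∧ P n * P n = P n) ∧
      Tendsto (fun n : ℕ => ((tpow ρ n * P n).trace).re) atTop (nhds 1) ∧
      Tendsto (fun n : ℕ => ((tpow τ n * P n).trace).re) atTop (nhds 0) := by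
  obtain ⟨Q, a, b, hQ, hQQ, ha, hb, hb₀, hba, ha₁⟩ :=
    exists_projection_re_trace_mul_lt hρ hρtr hτ hτtr hne
  let P (n : ℕ) := ∑ x ∈ Finset.univ.filter fun x : Fin n → Bool => (a + b) / 2 * n ≤ numTrue x,
    patternProjection Q x
  have hP (n : ℕ) : (P n).IsHermitian ∧ IsIdempotentElem (P n) :=
    ⟨isHermitian_sum_patternProjection hQ _, isIdempotentElem_sum_patternProjection hQQ _⟩
  have hρP : Tendsto (fun n : ℕ => ((tpow ρ n * P n).trace).re) atTop (nhds 1) := by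
    simpa only [P, re_trace_tpow_mul_sum_patternProjection hρtr ha] using
      tendsto_sum_bernoulliWeight_le_numTrue_of_gt (hb₀.trans hba.le) ha₁ (by linarith)
  have hτP : Tendsto (fun n : ℕ => ((tpow τ n * P n).trace).re) atTop (nhds 0) := by
    simpa only [P, re_trace_tpow_mul_sum_patternProjection hτtr hb] using
      tendsto_sum_bernoulliWeight_le_numTrue_of_lt hb₀ (hba.le.trans ha₁) (by linarith)
  refine ⟨?_, P, hP, hρP, hτP⟩
  refine tendsto_of_tendsto_of_tendsto_of_le_of_le (by simpa using (hρP.sub hτP).const_mul 2)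
    tendsto_const_nhds (fun n => ?_) (fun n => ?_)
  · have h := (hH n).two_mul_re_trace_mul_le ((hP n).1.posSemidef_of_isIdempotentElem (hP n).2)
      ((isHermitian_one.sub (hP n).1).posSemidef_of_isIdempotentElem (hP n).2.one_sub)
    simpa [sub_mul, trace_tpow, hρtr, hτtr] using h
  · simpa [trace_tpow, hρtr, hτtr, one_add_one_eq_two] using
      sum_abs_eigenvalues_sub_le (hρ.tpow n) (hτ.tpow n) (hH n)
end

section
/- The operators R₁ = (1/3)(2V₍₂₃₎ − V₍₁₃₎ − V₍₁₂₎), R₂ = (1/√3)(V₍₁₂₎ − V₍₁₃₎), R₃ = (i/√3)(V₍₁₂₃₎ − V₍₃₂₁₎) restricted to the support of R₀ = I − R₊ − R₋ satisfy the Pauli algebra relations: RᵢRⱼ + RⱼRᵢ = 2δᵢⱼR₀ for i,j ∈ {1,2,3}. -/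
open Matrix

/-- The unitary representation of a permutation `σ ∈ S₃` on `(ℂ^d)^{⊗3}`. -/
noncomputable def Vperm (d : ℕ) (σ : Equiv.Perm (Fin 3)) :
    Matrix (Fin 3 → Fin d) (Fin 3 → Fin d) ℂ :=
  Matrix.of fun f g => if ∀ i, f i = g (σ i) then 1 else 0

/-- Projector onto the totally symmetric subspace. -/
noncomputable def Rplus (d : ℕ) : Matrix (Fin 3 → Fin d) (Fin 3 → Fin d) ℂ :=
  (1 / 6 : ℂ) • (Vperm d 1 + Vperm d (Equiv.swap 0 1) + Vperm d (Equiv.swap 0 2)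
    + Vperm d (Equiv.swap 1 2) + Vperm d (finRotate 3) + Vperm d (finRotate 3)⁻¹)

/-- Projector onto the totally antisymmetric subspace. -/
noncomputable def Rminus (d : ℕ) : Matrix (Fin 3 → Fin d) (Fin 3 → Fin d) ℂ :=
  (1 / 6 : ℂ) • (Vperm d 1 - Vperm d (Equiv.swap 0 1) - Vperm d (Equiv.swap 0 2)
    - Vperm d (Equiv.swap 1 2) + Vperm d (finRotate 3) + Vperm d (finRotate 3)⁻¹)

/-- `R₀ = I − R₊ − R₋`: projector onto the mixed-symmetry isotypic component. -/
noncomputable def Rzero (d : ℕ) : Matrix (Fin 3 → Fin d) (Fin 3 → Fin d) ℂ :=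
  1 - Rplus d - Rminus d

/-- `R₁ = (1/3)(2V₍₂₃₎ − V₍₁₃₎ − V₍₁₂₎)`. -/
noncomputable def Rone (d : ℕ) : Matrix (Fin 3 → Fin d) (Fin 3 → Fin d) ℂ :=
  (1 / 3 : ℂ) • ((2 : ℂ) • Vperm d (Equiv.swap 1 2) - Vperm d (Equiv.swap 0 2)
    - Vperm d (Equiv.swap 0 1))

/-- `R₂ = (1/√3)(V₍₁₂₎ − V₍₁₃₎)`. -/
noncomputable def Rtwo (d : ℕ) : Matrix (Fin 3 → Fin d) (Fin 3 → Fin d) ℂ :=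
  ((Real.sqrt 3 : ℂ))⁻¹ • (Vperm d (Equiv.swap 0 1) - Vperm d (Equiv.swap 0 2))

/-- `R₃ = (i/√3)(V₍₁₂₃₎ − V₍₃₂₁₎)`. -/
noncomputable def Rthree (d : ℕ) : Matrix (Fin 3 → Fin d) (Fin 3 → Fin d) ℂ :=
  (Complex.I / (Real.sqrt 3 : ℂ)) • (Vperm d (finRotate 3) - Vperm d (finRotate 3)⁻¹)

/-!
Every operator in the statement is a linear combination of the six matrices `V₍σ₎`, and
`σ ↦ V₍σ₎` is an anti-homomorphism, so the statement is an identity in the group algebra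
of `S₃`. That algebra is generated by the images `x, y` of the Coxeter generators
`(12), (23)`, subject to `x² = y² = 1` and `xyx = yxy`, so the identities hold in every
`ℂ`-algebra containing such a pair.
-/

structure IsS3Pair {M : Type*} [Monoid M] (x y : M) : Prop where
  mul_self_left : x * x = 1
  mul_self_right : y * y = 1
  braid : x * y * x = y * x * y

namespace IsS3Pair

variable {M : Type*} [Monoid M] {x y : M}

theorem mul_self_left_mul (h : IsS3Pair x y) (z : M) : x * (x * z) = z := by
  rw [← mul_assoc, h.mul_self_left, one_mul]

theorem mul_self_right_mul (h : IsS3Pair x y) (z : M) : y * (y * z) = z := by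
  rw [← mul_assoc, h.mul_self_right, one_mul]

theorem braid_assoc (h : IsS3Pair x y) : y * (x * y) = x * (y * x) := by
  simpa only [mul_assoc] using h.braid.symm

theorem braid_mul (h : IsS3Pair x y) (z : M) : y * (x * (y * z)) = x * (y * (x * z)) := by
  simp only [← mul_assoc, h.braid]

end IsS3Pair

section PauliRelations

variable {A : Type*} [Ring A] [Algebra ℂ A]

/-- `R₀ = I − (R₊ + R₋)`, since `R₊ + R₋ = (1 + C + C²)/3` for the 3-cycle `C = yx`. -/
noncomputable def mixedProj (x y : A) : A := 1 - (1 / 3 : ℂ) • (1 + x * y + y * x)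

noncomputable def pauliOne (x y : A) : A := (1 / 3 : ℂ) • ((2 : ℂ) • y - x * y * x - x)

noncomputable def pauliTwo (x y : A) : A := ((Real.sqrt 3 : ℂ))⁻¹ • (x - x * y * x)

noncomputable def pauliThree (x y : A) : A :=
  (Complex.I / (Real.sqrt 3 : ℂ)) • (y * x - x * y)

theorem IsS3Pair.pauli_relations {x y : A} (h : IsS3Pair x y) :
    (mixedProj x y * pauliOne x y * mixedProj x y = pauliOne x y ∧
     mixedProj x y * pauliTwo x y * mixedProj x y = pauliTwo x y ∧
     mixedProj x y * pauliThree x y * mixedProj x y = pauliThree x y) ∧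
    (pauliOne x y * pauliOne x y = mixedProj x y ∧
     pauliTwo x y * pauliTwo x y = mixedProj x y ∧
     pauliThree x y * pauliThree x y = mixedProj x y) ∧
    (pauliOne x y * pauliTwo x y + pauliTwo x y * pauliOne x y = 0 ∧
     pauliOne x y * pauliThree x y + pauliThree x y * pauliOne x y = 0 ∧
     pauliTwo x y * pauliThree x y + pauliThree x y * pauliTwo x y = 0) := by
  have h_sqrt : ((Real.sqrt 3 : ℂ))⁻¹ * ((Real.sqrt 3 : ℂ))⁻¹ = 1 / 3 := by
    rw [← mul_inv, ← Complex.ofReal_mul, Real.mul_self_sqrt (by norm_num)]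
    norm_num
  unfold mixedProj pauliOne pauliTwo pauliThree
  -- The rewriting system `xx → 1`, `yy → 1`, `yxy → xyx` is confluent with normal forms
  -- `1, x, y, xy, yx, xyx`, so after expansion only the scalar coefficients remain to compare.
  refine ⟨⟨?_, ?_, ?_⟩, ⟨?_, ?_, ?_⟩, ⟨?_, ?_, ?_⟩⟩ <;>
  · simp only [mul_add, add_mul, mul_sub, sub_mul, smul_mul_assoc, mul_smul_comm, smul_smul,
      smul_add, smul_sub, mul_assoc, one_mul, mul_one, h.mul_self_left, h.mul_self_right,
      h.mul_self_left_mul, h.mul_self_right_mul, h.braid_assoc, h.braid_mul]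
    match_scalars <;> grind [Complex.I_mul_I]

end PauliRelations

theorem Vperm_eq_permMatrix (d : ℕ) (σ : Equiv.Perm (Fin 3)) :
    Vperm d σ = Equiv.Perm.permMatrix ℂ (σ.arrowCongr (Equiv.refl (Fin d))) := by
  ext f g
  simp only [Vperm, of_apply, PEquiv.toMatrix_apply, Equiv.toPEquiv_apply, Option.mem_def,
    Option.some.injEq, funext_iff, Equiv.arrowCongr_apply, Equiv.coe_refl, Function.comp_apply, id]
  exact if_congr (σ.forall_congr fun i => by simp) rfl rfl

theorem Vperm_mul (d : ℕ) (σ τ : Equiv.Perm (Fin 3)) :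
    Vperm d σ * Vperm d τ = Vperm d (τ * σ) := by
  simp only [Vperm_eq_permMatrix, ← permMatrix_mul]
  rfl

theorem Vperm_one (d : ℕ) : Vperm d 1 = 1 := by
  rw [Vperm_eq_permMatrix]
  exact permMatrix_refl

theorem isS3Pair_Vperm (d : ℕ) :
    IsS3Pair (Vperm d (Equiv.swap 0 1)) (Vperm d (Equiv.swap 1 2)) where
  mul_self_left := by rw [Vperm_mul, Equiv.swap_mul_self, Vperm_one]
  mul_self_right := by rw [Vperm_mul, Equiv.swap_mul_self, Vperm_one]
  braid := by simp only [Vperm_mul]; congr 1; decide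

theorem Vperm_swap_zero_two (d : ℕ) :
    Vperm d (Equiv.swap 0 2) =
      Vperm d (Equiv.swap 0 1) * Vperm d (Equiv.swap 1 2) * Vperm d (Equiv.swap 0 1) := by
  simp only [Vperm_mul]; congr 1; decide

theorem Vperm_finRotate (d : ℕ) :
    Vperm d (finRotate 3) = Vperm d (Equiv.swap 1 2) * Vperm d (Equiv.swap 0 1) := by
  rw [Vperm_mul]; congr 1; decide

theorem Vperm_finRotate_inv (d : ℕ) :
    Vperm d (finRotate 3)⁻¹ = Vperm d (Equiv.swap 0 1) * Vperm d (Equiv.swap 1 2) := by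
  rw [Vperm_mul]; congr 1; decide

section Identification

variable (d : ℕ)

local notation "X" => Vperm d (Equiv.swap 0 1)
local notation "Y" => Vperm d (Equiv.swap 1 2)

theorem Rzero_eq_mixedProj : Rzero d = mixedProj X Y := by
  rw [Rzero, Rplus, Rminus, mixedProj, Vperm_one, Vperm_finRotate, Vperm_finRotate_inv]
  module

theorem Rone_eq_pauliOne : Rone d = pauliOne X Y := by
  rw [Rone, pauliOne, Vperm_swap_zero_two]

theorem Rtwo_eq_pauliTwo : Rtwo d = pauliTwo X Y := by
  rw [Rtwo, pauliTwo, Vperm_swap_zero_two]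

theorem Rthree_eq_pauliThree : Rthree d = pauliThree X Y := by
  rw [Rthree, pauliThree, Vperm_finRotate, Vperm_finRotate_inv]

end Identification

theorem stmt14_general (d : ℕ) :
    (Rzero d * Rone d * Rzero d = Rone d ∧
     Rzero d * Rtwo d * Rzero d = Rtwo d ∧
     Rzero d * Rthree d * Rzero d = Rthree d) ∧
    (Rone d * Rone d = Rzero d ∧
     Rtwo d * Rtwo d = Rzero d ∧
     Rthree d * Rthree d = Rzero d) ∧
    (Rone d * Rtwo d + Rtwo d * Rone d = 0 ∧
     Rone d * Rthree d + Rthree d * Rone d = 0 ∧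
     Rtwo d * Rthree d + Rthree d * Rtwo d = 0) := by
  rw [Rzero_eq_mixedProj, Rone_eq_pauliOne, Rtwo_eq_pauliTwo, Rthree_eq_pauliThree]
  exact (isS3Pair_Vperm d).pauli_relations

/-- the operators `R₁, R₂, R₃`, supported on `R₀`, satisfy the Pauli
algebra relations `RᵢRⱼ + RⱼRᵢ = 2δᵢⱼR₀`. -/
theorem stmt14 (d : ℕ) (hd : 2 ≤ d) :
    (Rzero d * Rone d * Rzero d = Rone d ∧
     Rzero d * Rtwo d * Rzero d = Rtwo d ∧
     Rzero d * Rthree d * Rzero d = Rthree d) ∧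
    (Rone d * Rone d = Rzero d ∧
     Rtwo d * Rtwo d = Rzero d ∧
     Rthree d * Rthree d = Rzero d) ∧
    (Rone d * Rtwo d + Rtwo d * Rone d = 0 ∧
     Rone d * Rthree d + Rthree d * Rone d = 0 ∧
     Rtwo d * Rthree d + Rthree d * Rtwo d = 0) :=
  stmt14_general d
end

section
/- Let the 4×4 Hermitian matrix Z have entries as in (1/2)(X₁⊗Y₁ + X₂⊗Y₂) with X₁ = s₀σ₀+s₁σ₁+s₂σ₂, Y₁ = t₀σ₀+t₁σ₁+t₂σ₂, X₂ = s₀σ₀+s₁σ₁−s₂σ₂, Y₂ = t₀σ₀+t₁σ₁−t₂σ₂ (Pauli matrices σᵢ). Then its eigenvalues are λ = ±√(s₂²t₂² + (s₀t₁ − s₁t₀)²) − s₁t₁ + s₀t₀ and λ = ±√(s₂²t₂² + (s₀t₁ + s₁t₀)²) + s₁t₁ + s₀t₀. -/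
/-!
Averaging the two tensor products cancels the cross terms, leaving
`(s₀σ₀ + s₁σ₁) ⊗ (t₀σ₀ + t₁σ₁) + s₂t₂ σ₂ ⊗ σ₂`. This operator commutes with `σ₁ ⊗ σ₁`, and on
each of its two-dimensional eigenspaces it acts as a real symmetric `2 × 2` matrix; hence the
characteristic polynomial factors into two quadratics, whose roots are the stated eigenvalues.
-/

open Matrix Kronecker

/-- Pauli matrices (σ₀ = I₂). -/
noncomputable def pauli : Fin 4 → Matrix (Fin 2) (Fin 2) ℂ
  | 0 => 1
  | 1 => !![0, 1; 1, 0]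
  | 2 => !![0, -Complex.I; Complex.I, 0]
  | 3 => !![1, 0; 0, -1]

theorem Matrix.mem_spectrum_iff_det_eq_zero {n K : Type*} [Fintype n] [DecidableEq n] [Field K]
    (A : Matrix n n K) (μ : K) : μ ∈ spectrum K A ↔ (scalar n μ - A).det = 0 := by
  rw [mem_spectrum_iff_isRoot_charpoly, Polynomial.IsRoot.def, eval_charpoly]

theorem Matrix.half_smul_kronecker_add_kronecker_sub {K l m n p : Type*} [Field K] [NeZero (2 : K)]
    (A U : Matrix l m K) (B V : Matrix n p K) :
    (1 / 2 : K) • ((A + U) ⊗ₖ (B + V) + (A - U) ⊗ₖ (B - V)) = A ⊗ₖ B + U ⊗ₖ V := by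
  ext i j
  simp only [smul_apply, add_apply, sub_apply, kroneckerMap_apply, smul_eq_mul]
  field_simp
  ring

/-- The matrix of `(s₀σ₀ + s₁σ₁) ⊗ (t₀σ₀ + t₁σ₁) + s₂t₂ σ₂ ⊗ σ₂` in the basis
`|00⟩, |01⟩, |10⟩, |11⟩`, with `a = s₀t₀`, `b = s₀t₁`, `c = s₁t₀`, `d = s₁t₁`, `e = s₂t₂`. -/
def pauliProductMatrix {R : Type*} [CommRing R] (a b c d e : R) : Matrix (Fin 4) (Fin 4) R :=
  !![a, b, c, d - e;
     b, a, d + e, c;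
     c, d + e, a, b;
     d - e, c, b, a]

theorem det_scalar_sub_pauliProductMatrix {R : Type*} [CommRing R] (a b c d e μ : R) :
    (scalar (Fin 4) μ - pauliProductMatrix a b c d e).det =
      ((μ - (a - d)) ^ 2 - (e ^ 2 + (b - c) ^ 2)) * ((μ - (a + d)) ^ 2 - (e ^ 2 + (b + c) ^ 2)) := by
  simp [pauliProductMatrix, det_succ_row_zero, Fin.sum_univ_succ, Fin.succAbove]
  ring

theorem reindex_pauli_kronecker_eq_pauliProductMatrix (s0 s1 s2 t0 t1 t2 : ℂ) :
    (reindex finProdFinEquiv finProdFinEquiv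
      ((s0 • pauli 0 + s1 • pauli 1) ⊗ₖ (t0 • pauli 0 + t1 • pauli 1) +
        (s2 • pauli 2) ⊗ₖ (t2 • pauli 2)) : Matrix (Fin 4) (Fin 4) ℂ) =
      pauliProductMatrix (s0 * t0) (s0 * t1) (s1 * t0) (s1 * t1) (s2 * t2) := by
  ext i j
  fin_cases i <;> fin_cases j <;>
    simp [pauli, pauliProductMatrix, finProdFinEquiv, kroneckerMap_apply, one_apply, Fin.divNat,
      Fin.modNat]
    <;> (ring_nf; rw [Complex.I_sq]; ring)

theorem mul_sub_sq_sub_sq_eq_zero_iff {R : Type*} [CommRing R] [IsDomain R] {z p q u v : R} :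
    ((z - p) ^ 2 - u ^ 2) * ((z - q) ^ 2 - v ^ 2) = 0 ↔
      z = u + p ∨ z = -u + p ∨ z = v + q ∨ z = -v + q := by
  rw [mul_eq_zero, sub_eq_zero, sub_eq_zero, sq_eq_sq_iff_eq_or_eq_neg, sq_eq_sq_iff_eq_or_eq_neg]
  simp only [sub_eq_iff_eq_add, or_assoc]

/-- the eigenvalues of `(1/2)(X₁⊗Y₁ + X₂⊗Y₂)` with
`X₁ = s₀σ₀+s₁σ₁+s₂σ₂`, `Y₁ = t₀σ₀+t₁σ₁+t₂σ₂`, `X₂, Y₂` having the sign of the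
`σ₂`-component flipped, are `±√(s₂²t₂² + (s₀t₁ − s₁t₀)²) − s₁t₁ + s₀t₀` and
`±√(s₂²t₂² + (s₀t₁ + s₁t₀)²) + s₁t₁ + s₀t₀`. -/
theorem stmt15 (s0 s1 s2 t0 t1 t2 : ℝ) :
    spectrum ℂ
      ((1 / 2 : ℂ) •
        (((s0 : ℂ) • pauli 0 + (s1 : ℂ) • pauli 1 + (s2 : ℂ) • pauli 2) ⊗ₖ
            ((t0 : ℂ) • pauli 0 + (t1 : ℂ) • pauli 1 + (t2 : ℂ) • pauli 2)
          + ((s0 : ℂ) • pauli 0 + (s1 : ℂ) • pauli 1 - (s2 : ℂ) • pauli 2) ⊗ₖ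
            ((t0 : ℂ) • pauli 0 + (t1 : ℂ) • pauli 1 - (t2 : ℂ) • pauli 2)))
      = {((Real.sqrt (s2 ^ 2 * t2 ^ 2 + (s0 * t1 - s1 * t0) ^ 2) - s1 * t1 + s0 * t0 : ℝ) : ℂ),
         ((-Real.sqrt (s2 ^ 2 * t2 ^ 2 + (s0 * t1 - s1 * t0) ^ 2) - s1 * t1 + s0 * t0 : ℝ) : ℂ),
         ((Real.sqrt (s2 ^ 2 * t2 ^ 2 + (s0 * t1 + s1 * t0) ^ 2) + s1 * t1 + s0 * t0 : ℝ) : ℂ),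
         ((-Real.sqrt (s2 ^ 2 * t2 ^ 2 + (s0 * t1 + s1 * t0) ^ 2) + s1 * t1 + s0 * t0 : ℝ) : ℂ)} := by
  rw [half_smul_kronecker_add_kronecker_sub,
    ← AlgEquiv.spectrum_eq (reindexAlgEquiv ℂ ℂ finProdFinEquiv), coe_reindexAlgEquiv,
    reindex_pauli_kronecker_eq_pauliProductMatrix]
  ext μ
  rw [mem_spectrum_iff_det_eq_zero, det_scalar_sub_pauliProductMatrix]
  have hsqrt {r : ℝ} (hr : 0 ≤ r) : ((√r : ℝ) : ℂ) ^ 2 = r := by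
    rw [← Complex.ofReal_pow, Real.sq_sqrt hr]
  have hu : ((s2 : ℂ) * t2) ^ 2 + ((s0 : ℂ) * t1 - s1 * t0) ^ 2 =
      ((√(s2 ^ 2 * t2 ^ 2 + (s0 * t1 - s1 * t0) ^ 2) : ℝ) : ℂ) ^ 2 := by
    rw [hsqrt (by positivity)]; push_cast; ring
  have hv : ((s2 : ℂ) * t2) ^ 2 + ((s0 : ℂ) * t1 + s1 * t0) ^ 2 =
      ((√(s2 ^ 2 * t2 ^ 2 + (s0 * t1 + s1 * t0) ^ 2) : ℝ) : ℂ) ^ 2 := by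
    rw [hsqrt (by positivity)]; push_cast; ring
  rw [hu, hv, mul_sub_sq_sub_sq_eq_zero_iff]
  simp only [Set.mem_insert_iff, Set.mem_singleton_iff]
  push_cast
  ring_nf
end
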